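/- arXiv:2412.12291 — 3 statements merged into one kernel-verified Lean document; each statement's English description precedes it below -/
import Mathlib

section
/- Let J be an arbitrary index type and let a : J × {1,…,n} → ℝ be given coupling coefficients. Say a nonempty subset S ⊆ {1,…,n} admits a decoherence-free sign vector if there exists w : S → {−1,1} with ∑_{i∈S} w_i a_{j,i} = 0 for all j ∈ J. Suppose that no subset S with 1 ≤ |S| < n admits a decoherence-free sign vector. Then for any two distinct sign vectors z, z' : {1,…,n} → {−1,1} satisfying ∑_{i=1}^n z_i a_{j,i} = ∑_{i=1}^n z'_i a_{j,i} for all j ∈ J, one has z' = −z (i.e., z'_i = −z_i for every i), and moreover ∑_{i=1}^n z_i a_{j,i} = 0 for all j ∈ J. -/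
/-!
Two sign vectors with equal couplings differ exactly on the set `S` where `z' = -z`, so half the
difference of their couplings is `∑_{i ∈ S} z i * a j i`, which therefore vanishes: `z` restricted
to `S` is a decoherence-free sign vector. By minimality `S` cannot be a proper nonempty subset, and it
is nonempty because `z ≠ z'`; hence `S` is everything, `z' = -z`, and the couplings of `z` vanish.
-/

open Finset

section SignVectors

variable {ι J R : Type*}

lemma eq_neg_of_ne_of_eq_one_or_eq_neg_one [InvolutiveNeg R] [One R] {x y : R}
    (hx : x = 1 ∨ x = -1) (hy : y = 1 ∨ y = -1) (hne : x ≠ y) : y = -x := by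
  rcases hx with rfl | rfl <;> rcases hy with rfl | rfl <;> simp_all

def IsDecoherenceFreeSignVector [Ring R] (a : J → ι → R) (S : Finset ι) (w : ι → R) : Prop :=
  (∀ i ∈ S, w i = 1 ∨ w i = -1) ∧ ∀ j, ∑ i ∈ S, w i * a j i = 0

variable [Fintype ι] [DecidableEq R]

lemma sum_mul_sub_sum_mul_eq_two_mul_sum_filter_ne [CommRing R] {z z' : ι → R}
    (hz : ∀ i, z i = 1 ∨ z i = -1) (hz' : ∀ i, z' i = 1 ∨ z' i = -1) (c : ι → R) :
    ∑ i, z i * c i - ∑ i, z' i * c i = 2 * ∑ i with z i ≠ z' i, z i * c i := by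
  have hdiff : ∀ i ∈ univ.filter (fun i => z i ≠ z' i), (z i - z' i) * c i = 2 * (z i * c i) :=
    fun i hi => by
      rw [eq_neg_of_ne_of_eq_one_or_eq_neg_one (hz i) (hz' i) (mem_filter.mp hi).2]
      ring
  rw [← sum_sub_distrib, mul_sum, ← sum_congr rfl hdiff,
    sum_filter_of_ne fun i _ h => sub_ne_zero.mp (left_ne_zero_of_mul h)]
  exact sum_congr rfl fun i _ => (sub_mul _ _ _).symm

lemma isDecoherenceFreeSignVector_filter_ne [Field R] [CharZero R] (a : J → ι → R)
    {z z' : ι → R} (hz : ∀ i, z i = 1 ∨ z i = -1) (hz' : ∀ i, z' i = 1 ∨ z' i = -1)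
    (hcoup : ∀ j, ∑ i, z i * a j i = ∑ i, z' i * a j i) :
    IsDecoherenceFreeSignVector a (univ.filter fun i => z i ≠ z' i) z := by
  refine ⟨fun i _ => hz i, fun j => ?_⟩
  have h := sum_mul_sub_sum_mul_eq_two_mul_sum_filter_ne hz hz' (a j)
  rw [hcoup j, sub_self, eq_comm, mul_eq_zero] at h
  exact h.resolve_left two_ne_zero

end SignVectors

/-- Paper: Appendix, 'One DFS for minimal sized sensor networks'.
Let `a : J × Fin n → ℝ` be coupling coefficients. A nonempty subset
`S ⊆ {1,…,n}` admits a decoherence-free sign vector if there is `w` with values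
`±1` on `S` and `∑_{i∈S} w i · a j i = 0` for all `j`. If no subset of size
`1 ≤ |S| < n` admits a decoherence-free sign vector, then any two distinct sign
vectors `z, z'` with equal couplings `∑_i z i · a j i = ∑_i z' i · a j i` for
all `j` satisfy `z' = −z`, and moreover `∑_i z i · a j i = 0` for all `j`. -/
theorem minimal_sensor_network_unique_dfs
    (n : ℕ) {J : Type*} (a : J → Fin n → ℝ)
    (hmin : ∀ S : Finset (Fin n), 1 ≤ S.card → S.card < n →
      ¬ ∃ w : Fin n → ℝ, (∀ i ∈ S, w i = 1 ∨ w i = -1) ∧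
        ∀ j, ∑ i ∈ S, w i * a j i = 0)
    (z z' : Fin n → ℝ)
    (hz : ∀ i, z i = 1 ∨ z i = -1) (hz' : ∀ i, z' i = 1 ∨ z' i = -1)
    (hne : z ≠ z')
    (hcoup : ∀ j, ∑ i, z i * a j i = ∑ i, z' i * a j i) :
    (∀ i, z' i = - z i) ∧ (∀ j, ∑ i, z i * a j i = 0) := by
  set S := univ.filter fun i => z i ≠ z' i
  have hdfs : IsDecoherenceFreeSignVector a S z :=
    isDecoherenceFreeSignVector_filter_ne a hz hz' hcoup
  have hS_nonempty : S.Nonempty := by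
    obtain ⟨i, hi⟩ := Function.ne_iff.mp hne
    exact ⟨i, mem_filter.mpr ⟨mem_univ i, hi⟩⟩
  have hS : S = univ := by
    by_contra hS
    have hcard : S.card < n := by simpa using (card_lt_iff_ne_univ S).mpr hS
    exact hmin S hS_nonempty.card_pos hcard ⟨z, hdfs⟩
  refine ⟨fun i => eq_neg_of_ne_of_eq_one_or_eq_neg_one (hz i) (hz' i) ?_, fun j => ?_⟩
  · exact (mem_filter.mp (hS ▸ mem_univ i : i ∈ S)).2
  · simpa [hS] using hdfs.2 j
end

section
/- Let A ∈ [0,1] and α, φ ∈ ℝ. Then ∫_0^{2π} Π_{arcsin A}(s + φ) · cos(α − s) ds = (4/π) · ∫_0^{2π} A · cos(s + φ) · cos(α − s) ds, i.e., over a full period the slow rectangular-pulse control sequence couples to a monochromatic field exactly 4/π times more strongly than the fast sinusoidal control sequence with the same amplitude and phase. -/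
open Real MeasureTheory intervalIntegral


open Classical in
/-- The 2π-periodic rectangular wave: `Π_γ t = 1` if `t` lies in `(-γ, γ)`
modulo `2π`, and `−1` otherwise. -/
noncomputable def rectWave (γ t : ℝ) : ℝ :=
  if ∃ k : ℤ, -γ < t - 2 * Real.pi * k ∧ t - 2 * Real.pi * k < γ then 1 else -1

lemma rectWave_measurable (γ : ℝ) : Measurable (rectWave γ) := by
  unfold rectWave
  refine Measurable.ite ?_ measurable_const measurable_const
  have : {t : ℝ | ∃ k : ℤ, -γ < t - 2 * Real.pi * k ∧ t - 2 * Real.pi * k < γ}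
      = ⋃ k : ℤ, Set.Ioo (2 * Real.pi * k - γ) (2 * Real.pi * k + γ) := by
    ext t
    simp only [Set.mem_setOf_eq, Set.mem_iUnion, Set.mem_Ioo]
    constructor
    · rintro ⟨k, h1, h2⟩; exact ⟨k, by linarith, by linarith⟩
    · rintro ⟨k, h1, h2⟩; exact ⟨k, by linarith, by linarith⟩
  rw [this]
  exact MeasurableSet.iUnion fun k => measurableSet_Ioo

lemma rectWave_abs_le (γ t : ℝ) : |rectWave γ t| ≤ 1 := by
  unfold rectWave; split_ifs <;> simp

open Classical in
lemma rectWave_periodic (γ : ℝ) : Function.Periodic (rectWave γ) (2 * Real.pi) := by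
  intro t
  unfold rectWave
  refine if_congr ?_ rfl rfl
  constructor
  · rintro ⟨k, h1, h2⟩
    refine ⟨k - 1, ?_, ?_⟩ <;> push_cast <;> [linarith; linarith]
  · rintro ⟨k, h1, h2⟩
    refine ⟨k + 1, ?_, ?_⟩ <;> push_cast <;> [linarith; linarith]

lemma rectWave_eq_one {γ t : ℝ} (h1 : -γ < t) (h2 : t < γ) : rectWave γ t = 1 := by
  unfold rectWave
  rw [if_pos ⟨0, by push_cast; simpa, by push_cast; simpa⟩]

lemma rectWave_eq_neg_one {γ t : ℝ} (hγ : γ ≤ Real.pi / 2) (ht : |t| ≤ Real.pi)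
    (h : γ ≤ |t|) : rectWave γ t = -1 := by
  have hπ := Real.pi_pos
  rw [abs_le] at ht
  unfold rectWave
  rw [if_neg]
  rintro ⟨k, h1, h2⟩
  have hk0 : k = 0 := by
    have hlt : (k : ℝ) < 1 := by nlinarith
    have hgt : (-1 : ℝ) < (k : ℝ) := by nlinarith
    have : k < 1 := by exact_mod_cast hlt
    have : (-1 : ℤ) < k := by exact_mod_cast hgt
    omega
  subst hk0
  push_cast at h1 h2
  simp only [mul_zero, sub_zero] at h1 h2
  rw [le_abs] at h
  rcases h with h | h <;> linarith

lemma int_cos_sub (c a b : ℝ) :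
    ∫ u in a..b, Real.cos (c - u) = Real.sin (c - a) - Real.sin (c - b) := by
  have h : ∀ u ∈ Set.uIcc a b,
      HasDerivAt (fun u => -Real.sin (c - u)) (Real.cos (c - u)) u := by
    intro u _
    have h1 : HasDerivAt (fun u : ℝ => c - u) (0 - 1) u :=
      (hasDerivAt_const u c).sub (hasDerivAt_id u)
    have h2 := ((Real.hasDerivAt_sin (c - u)).comp u h1).neg
    exact h2.congr_deriv (by ring)
  rw [integral_eq_sub_of_hasDerivAt h
    ((Real.continuous_cos.comp (continuous_const.sub continuous_id)).intervalIntegrable a b)]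
  ring

lemma rhs_int (A α φ : ℝ) :
    ∫ s in (0:ℝ)..(2 * Real.pi), A * Real.cos (s + φ) * Real.cos (α - s)
      = Real.pi * A * Real.cos (α + φ) := by
  have hder : ∀ s ∈ Set.uIcc (0:ℝ) (2 * Real.pi),
      HasDerivAt (fun s => A * (Real.cos (α + φ) * s / 2 + Real.sin (2 * s + φ - α) / 4))
        (A * Real.cos (s + φ) * Real.cos (α - s)) s := by
    intro s _
    have h1 : HasDerivAt (fun s : ℝ => Real.cos (α + φ) * s / 2)
        (Real.cos (α + φ) * 1 / 2) s :=
      ((hasDerivAt_id s).const_mul (Real.cos (α + φ))).div_const 2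
    have hin : HasDerivAt (fun s : ℝ => 2 * s + φ - α) (2 * 1) s := by
      simpa using (((hasDerivAt_id s).const_mul 2).add_const φ).sub_const α
    have h2 : HasDerivAt (fun s : ℝ => Real.sin (2 * s + φ - α) / 4)
        (Real.cos (2 * s + φ - α) * (2 * 1) / 4) s :=
      ((Real.hasDerivAt_sin (2 * s + φ - α)).comp s hin :).div_const 4
    have h3 := ((h1.add h2).const_mul A)
    refine h3.congr_deriv (Eq.symm ?_)
    have key : ∀ a x y : ℝ, a * Real.cos x * Real.cos y
        = a * (Real.cos (x + y) + Real.cos (x - y)) / 2 := by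
      intro a x y
      rw [Real.cos_add, Real.cos_sub]
      ring
    rw [key A (s + φ) (α - s), show (s + φ) + (α - s) = α + φ by ring,
      show (s + φ) - (α - s) = 2 * s + φ - α by ring]
    ring
  rw [integral_eq_sub_of_hasDerivAt hder (by apply Continuous.intervalIntegrable; continuity)]
  rw [show 2 * (2 * Real.pi) + φ - α = φ - α + 2 * Real.pi + 2 * Real.pi by ring,
    Real.sin_add_two_pi, Real.sin_add_two_pi]
  ring

/-- Paper: Section 4.1.3 and Appendix C.
Let `A ∈ [0,1]` and `α, φ ∈ ℝ`. Over a full period the slow rectangular-pulse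
control `Π_{arcsin A}(s + φ)` couples to the monochromatic field `cos(α − s)`
exactly `4/π` times more strongly than the fast sinusoidal control
`A cos(s + φ)`:
`∫_0^{2π} Π_{arcsin A}(s+φ) cos(α−s) ds = (4/π) ∫_0^{2π} A cos(s+φ) cos(α−s) ds`. -/
theorem slow_control_coupling_eq_four_div_pi_mul_fast
    (A α φ : ℝ) (hA0 : 0 ≤ A) (hA1 : A ≤ 1) :
    ∫ s in (0 : ℝ)..(2 * Real.pi), rectWave (Real.arcsin A) (s + φ) * Real.cos (α - s)
      = (4 / Real.pi) * ∫ s in (0 : ℝ)..(2 * Real.pi),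
          A * Real.cos (s + φ) * Real.cos (α - s) := by
  have hπ := Real.pi_pos
  set γ := Real.arcsin A with hγdef
  have hγ0 : 0 ≤ γ := Real.arcsin_nonneg.mpr hA0
  have hγπ : γ ≤ Real.pi / 2 := Real.arcsin_le_pi_div_two A
  have hγπ' : γ ≤ Real.pi := by linarith
  have hsin : Real.sin γ = A := Real.sin_arcsin (by linarith) hA1
  set c := α + φ with hcdef
  set g : ℝ → ℝ := fun u => rectWave γ u * Real.cos (c - u) with hgdef
  -- integrability of g
  have hint : ∀ a b : ℝ, IntervalIntegrable g volume a b := by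
    intro a b
    rw [intervalIntegrable_iff]
    refine Integrable.mono' (g := fun _ => (1:ℝ))
      (integrableOn_const measure_Ioc_lt_top.ne) ?_ ?_
    · exact ((rectWave_measurable γ).mul
        (Real.continuous_cos.comp (continuous_const.sub continuous_id)).measurable).aestronglyMeasurable.restrict
    · filter_upwards with u
      have := rectWave_abs_le γ u
      have h2 := Real.abs_cos_le_one (c - u)
      calc ‖rectWave γ u * Real.cos (c - u)‖ = |rectWave γ u| * |Real.cos (c - u)| := by
            rw [Real.norm_eq_abs, abs_mul]
        _ ≤ 1 := mul_le_one₀ this (abs_nonneg _) h2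
  -- rewrite the LHS integrand as g (s + φ)
  have hLHS1 : ∫ s in (0:ℝ)..(2 * Real.pi), rectWave γ (s + φ) * Real.cos (α - s)
      = ∫ s in (0:ℝ)..(2 * Real.pi), g (s + φ) := by
    refine intervalIntegral.integral_congr fun s _ => ?_
    simp only [hgdef]
    rw [show c - (s + φ) = α - s by rw [hcdef]; ring]
  -- shift and use periodicity
  have hper : Function.Periodic g (2 * Real.pi) := by
    intro u
    simp only [hgdef]
    rw [rectWave_periodic γ u, show c - (u + 2 * Real.pi) = (c - u) - 2 * Real.pi by ring,
      Real.cos_sub_two_pi]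
  have hLHS2 : ∫ s in (0:ℝ)..(2 * Real.pi), g (s + φ)
      = ∫ u in (-Real.pi)..Real.pi, g u := by
    rw [intervalIntegral.integral_comp_add_right g φ,
      show (0:ℝ) + φ = φ by ring, show 2 * Real.pi + φ = φ + 2 * Real.pi by ring,
      hper.intervalIntegral_add_eq φ (-Real.pi),
      show -Real.pi + 2 * Real.pi = Real.pi by ring]
  -- split the integral
  have hsplit : ∫ u in (-Real.pi)..Real.pi, g u
      = (∫ u in (-Real.pi)..(-γ), g u) + (∫ u in (-γ)..γ, g u)
        + (∫ u in γ..Real.pi, g u) := by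
    rw [intervalIntegral.integral_add_adjacent_intervals (hint _ _) (hint _ _),
      intervalIntegral.integral_add_adjacent_intervals (hint _ _) (hint _ _)]
  -- piece 1
  have hp1 : ∫ u in (-Real.pi)..(-γ), g u
      = -(Real.sin (c + Real.pi) - Real.sin (c + γ)) := by
    have : ∫ u in (-Real.pi)..(-γ), g u = ∫ u in (-Real.pi)..(-γ), -Real.cos (c - u) := by
      refine intervalIntegral.integral_congr fun u hu => ?_
      rw [Set.uIcc_of_le (by linarith)] at hu
      obtain ⟨hu1, hu2⟩ := hu
      simp only [hgdef]
      rw [rectWave_eq_neg_one hγπ (abs_le.mpr ⟨hu1, by linarith⟩)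
        (le_trans (by linarith [neg_le_abs u]) (le_refl |u|))]
      ring
    rw [this, intervalIntegral.integral_neg, int_cos_sub]
    ring_nf
  -- piece 3
  have hp3 : ∫ u in γ..Real.pi, g u
      = -(Real.sin (c - γ) - Real.sin (c - Real.pi)) := by
    have : ∫ u in γ..Real.pi, g u = ∫ u in γ..Real.pi, -Real.cos (c - u) := by
      refine intervalIntegral.integral_congr fun u hu => ?_
      rw [Set.uIcc_of_le (by linarith)] at hu
      obtain ⟨hu1, hu2⟩ := hu
      simp only [hgdef]
      rw [rectWave_eq_neg_one hγπ (abs_le.mpr ⟨by linarith, hu2⟩)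
        (le_trans hu1 (le_abs_self u))]
      ring
    rw [this, intervalIntegral.integral_neg, int_cos_sub]
  -- piece 2
  have hp2 : ∫ u in (-γ)..γ, g u = Real.sin (c + γ) - Real.sin (c - γ) := by
    have hae : ∀ᵐ u : ℝ, u ∈ Set.uIoc (-γ) γ → g u = Real.cos (c - u) := by
      have hne : ∀ᵐ u : ℝ, u ≠ γ := by
        rw [MeasureTheory.ae_iff]
        simp only [not_not, Set.setOf_eq_eq_singleton]
        exact Real.volume_singleton
      filter_upwards [hne] with u hu hmem
      rw [Set.uIoc_of_le (by linarith)] at hmem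
      obtain ⟨h1, h2⟩ := hmem
      simp only [hgdef]
      rw [rectWave_eq_one h1 (lt_of_le_of_ne h2 hu), one_mul]
    rw [intervalIntegral.integral_congr_ae hae, int_cos_sub]
    ring_nf
  -- assemble
  rw [hLHS1, hLHS2, hsplit, hp1, hp2, hp3, rhs_int A α φ]
  simp only [Real.sin_add, Real.sin_sub, Real.sin_pi, Real.cos_pi, hsin, hcdef]
  field_simp
  ring
end

section
/- Let P be a product probability density on bitstrings of length n, let m ≥ 1, and let {S_κ}_{κ} be a finite partition of {0,1}^n into classes such that within each class any two distinct bitstrings have Hamming distance at least m. Let g : {0,1}^n → ℝ. For each class κ with W_κ := ∑_{z∈S_κ} P(z) > 0, set μ_κ := W_κ^{−1} ∑_{z∈S_κ} P(z) g(z), and let osc_κ := max_{z∈S_κ} g(z) − min_{z∈S_κ} g(z). Then ∑_{κ : W_κ > 0} ∑_{z∈S_κ} P(z) (g(z) − μ_κ)² ≤ ( ∑_{ℓ=0}^{⌊(m−1)/2⌋} C(m,ℓ) )^{−1} · ∑_{κ} osc_κ². -/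
/-!
Fix a class `s` and let `w ∈ s` maximise `P` on it. The weighted variance of `g` on `s` is at most
`∑_{z ∈ s, z ≠ w} P z (g z - g w)² ≤ osc² · P(s \ {w})`, so it suffices that `c · P(s \ {w}) ≤ 1`
for `c = ∑_{ℓ ≤ r} C(m, ℓ)`, `r = ⌊(m - 1)/2⌋`. The Hamming balls of radius `r` around the points
of `s` are disjoint, so this follows from `c · P z ≤ P(ball z r)` for each `z ≠ w`. To see the
latter, move `z` to `w` on an `ℓ`-subset `T` of the `d ≥ m` coordinates where they differ: since
`P` is a product and `P z ≤ P w`, AM–GM over all such `T` shows that these points, which lie at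
distance `ℓ` from `z`, carry mass at least `C(d, ℓ) · P z ≥ C(m, ℓ) · P z`.
-/

open Finset

theorem Real.card_mul_le_sum_of_pow_card_le_prod {ι : Type*} {s : Finset ι} {x : ι → ℝ} {c : ℝ}
    (hx : ∀ i ∈ s, 0 ≤ x i) (hc : 0 ≤ c) (h : c ^ #s ≤ ∏ i ∈ s, x i) :
    #s * c ≤ ∑ i ∈ s, x i := by
  rcases s.eq_empty_or_nonempty with rfl | hs
  · simp
  have hN : (0 : ℝ) < #s := by exact_mod_cast hs.card_pos
  have amgm := Real.geom_mean_le_arith_mean s (fun _ => 1) x (fun _ _ => zero_le_one)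
    (by simpa using hN) hx
  simp only [Real.rpow_one, one_mul, sum_const, nsmul_eq_mul, mul_one] at amgm
  rw [← le_div_iff₀' hN]
  calc c = (c ^ #s) ^ ((#s : ℝ)⁻¹) := (Real.pow_rpow_inv_natCast hc hs.card_pos.ne').symm
    _ ≤ (∏ i ∈ s, x i) ^ ((#s : ℝ)⁻¹) := by gcongr
    _ ≤ _ := amgm

namespace Finset

section PowersetCard

variable {ι : Type*} [DecidableEq ι]

theorem card_filter_notMem_powersetCard (D : Finset ι) (i : ι) (ℓ : ℕ) :
    #{T ∈ D.powersetCard ℓ | i ∉ T} = (#(D.erase i)).choose ℓ := by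
  rw [← card_powersetCard]
  congr 1
  ext T
  simp only [mem_filter, mem_powersetCard, subset_erase]
  tauto

variable [Fintype ι] {M : Type*} [CommMonoid M]

theorem prod_powersetCard_prod_piecewise (D : Finset ι) (ℓ : ℕ) {a b : ι → M}
    (hab : ∀ i ∉ D, a i = b i) :
    ∏ T ∈ D.powersetCard ℓ, ∏ i, T.piecewise b a i
      = (∏ i, b i) ^ ((#D).choose ℓ - (#D - 1).choose ℓ) * (∏ i, a i) ^ (#D - 1).choose ℓ := by
  rw [prod_comm, ← prod_pow, ← prod_pow, ← prod_mul_distrib]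
  refine prod_congr rfl fun i _ => ?_
  simp only [Finset.piecewise, prod_ite, prod_const]
  have hsplit := card_filter_add_card_filter_not (s := D.powersetCard ℓ) (fun T => i ∈ T)
  rw [card_powersetCard] at hsplit
  by_cases hi : i ∈ D
  · rw [card_filter_notMem_powersetCard, card_erase_of_mem hi] at hsplit ⊢
    rw [← hsplit, Nat.add_sub_cancel]
  · have hle : (#D - 1).choose ℓ ≤ (#D).choose ℓ := Nat.choose_le_choose ℓ (Nat.sub_le _ 1)
    rw [hab i hi, ← pow_add, ← pow_add, hsplit, Nat.sub_add_cancel hle]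

theorem choose_mul_prod_le_sum_prod_piecewise (D : Finset ι) (ℓ : ℕ) {a b : ι → ℝ}
    (ha : ∀ i, 0 ≤ a i) (hb : ∀ i, 0 ≤ b i)
    (hab : ∀ i ∉ D, a i = b i) (hprod : ∏ i, a i ≤ ∏ i, b i) :
    (#D).choose ℓ * ∏ i, a i ≤ ∑ T ∈ D.powersetCard ℓ, ∏ i, T.piecewise b a i := by
  have hpa : 0 ≤ ∏ i, a i := prod_nonneg fun i _ => ha i
  rw [← card_powersetCard]
  refine Real.card_mul_le_sum_of_pow_card_le_prod
    (fun T _ => prod_nonneg fun i _ => by by_cases hi : i ∈ T <;> simp [hi, ha i, hb i]) hpa ?_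
  rw [prod_powersetCard_prod_piecewise D ℓ hab, card_powersetCard,
    ← Nat.sub_add_cancel (Nat.choose_le_choose ℓ (Nat.sub_le #D 1)), pow_add, Nat.add_sub_cancel]
  gcongr

end PowersetCard

end Finset

theorem sum_mul_sq_sub_weightedMean_le {α : Type*} (s : Finset α) (P g : α → ℝ)
    (hW : 0 < ∑ z ∈ s, P z) (a : ℝ) :
    ∑ z ∈ s, P z * (g z - (∑ z ∈ s, P z)⁻¹ * ∑ z ∈ s, P z * g z) ^ 2
      ≤ ∑ z ∈ s, P z * (g z - a) ^ 2 := by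
  have expand : ∀ x, ∑ z ∈ s, P z * (g z - x) ^ 2
      = ∑ z ∈ s, P z * g z ^ 2 - 2 * x * ∑ z ∈ s, P z * g z + x ^ 2 * ∑ z ∈ s, P z := by
    intro x
    simp only [mul_sum, ← sum_sub_distrib, ← sum_add_distrib]
    exact sum_congr rfl fun _ _ => by ring
  rw [expand, expand]
  -- the two sides differ by `(∑ P g - a ∑ P)² / ∑ P`
  field_simp
  nlinarith [sq_nonneg (∑ z ∈ s, P z * g z - a * ∑ z ∈ s, P z)]

theorem sq_sub_le_sq_sup'_sub_inf' {α : Type*} {s : Finset α} (hs : s.Nonempty) (g : α → ℝ)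
    {z w : α} (hz : z ∈ s) (hw : w ∈ s) : (g z - g w) ^ 2 ≤ (s.sup' hs g - s.inf' hs g) ^ 2 := by
  have := le_sup' g hz; have := le_sup' g hw; have := inf'_le g hz; have := inf'_le g hw
  exact sq_le_sq' (by linarith) (by linarith)

section Hamming

variable {ι : Type*} [Fintype ι] [DecidableEq ι] {β : ι → Type*} [∀ i, DecidableEq (β i)]

theorem hammingDist_piecewise_of_subset {z w : ∀ i, β i} {T : Finset ι}
    (hT : T ⊆ ({i | z i ≠ w i} : Finset ι)) : hammingDist (T.piecewise w z) z = #T := by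
  unfold hammingDist
  congr 1
  ext i
  by_cases hi : i ∈ T
  · simpa [hi, eq_comm] using hT hi
  · simp [hi]

theorem injOn_piecewise_of_subset (z w : ∀ i, β i) :
    Set.InjOn (fun T : Finset ι => T.piecewise w z) {T | T ⊆ ({i | z i ≠ w i} : Finset ι)} := by
  have key : ∀ T T', T ⊆ ({i | z i ≠ w i} : Finset ι) →
      T.piecewise w z = T'.piecewise w z → T ⊆ T' := by
    intro T T' hT h i hi
    by_contra hi'
    have := congr_fun h i
    rw [piecewise_eq_of_mem _ _ _ hi, piecewise_eq_of_notMem _ _ _ hi'] at this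
    simpa [this] using hT hi
  exact fun T hT T' hT' h => (key T T' hT h).antisymm (key T' T hT' h.symm)

variable [∀ i, Fintype (β i)]

def hammingBall (z : ∀ i, β i) (r : ℕ) : Finset (∀ i, β i) := {y | hammingDist y z ≤ r}

@[simp]
theorem mem_hammingBall {z y : ∀ i, β i} {r : ℕ} : y ∈ hammingBall z r ↔ hammingDist y z ≤ r := by
  simp [hammingBall]

theorem disjoint_hammingBall {z z' : ∀ i, β i} {r : ℕ} (h : 2 * r < hammingDist z z') :
    Disjoint (hammingBall z r) (hammingBall z' r) := by
  refine Finset.disjoint_left.2 fun y hy hy' => ?_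
  rw [mem_hammingBall] at hy hy'
  have := hammingDist_triangle z y z'
  rw [hammingDist_comm z y] at this
  omega

end Hamming

section ProductWeight

variable {ι : Type*} [Fintype ι] [DecidableEq ι] {β : ι → Type*} [∀ i, DecidableEq (β i)]
  [∀ i, Fintype (β i)] {F : ∀ i, β i → ℝ}

def productWeight (F : ∀ i, β i → ℝ) (x : ∀ i, β i) : ℝ := ∏ i, F i (x i)

omit [DecidableEq ι] [∀ i, DecidableEq (β i)] [∀ i, Fintype (β i)] in
theorem productWeight_nonneg (hF : ∀ i b, 0 ≤ F i b) (x : ∀ i, β i) : 0 ≤ productWeight F x :=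
  prod_nonneg fun i _ => hF i (x i)

omit [∀ i, DecidableEq (β i)] in
theorem sum_productWeight : ∑ x, productWeight F x = ∏ i, ∑ b, F i b :=
  (Fintype.prod_sum F).symm

theorem choose_mul_productWeight_le_sum_hammingSphere (hF : ∀ i b, 0 ≤ F i b) {m : ℕ}
    {z w : ∀ i, β i} (hzw : productWeight F z ≤ productWeight F w) (hm : m ≤ hammingDist z w)
    (ℓ : ℕ) :
    m.choose ℓ * productWeight F z ≤ ∑ y with hammingDist y z = ℓ, productWeight F y := by
  set D : Finset ι := {i | z i ≠ w i}
  have hsub : ∀ T ∈ D.powersetCard ℓ, T ⊆ D := fun T hT => (mem_powersetCard.1 hT).1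
  have hagree : ∀ i ∉ D, F i (z i) = F i (w i) := fun i hi => by
    simp only [D, mem_filter, mem_univ, true_and, not_not] at hi
    rw [hi]
  calc (m.choose ℓ : ℝ) * productWeight F z
      ≤ (#D).choose ℓ * productWeight F z := by
        gcongr
        · exact productWeight_nonneg hF z
        · exact hm
    _ ≤ ∑ T ∈ D.powersetCard ℓ, productWeight F (T.piecewise w z) := by
        refine (choose_mul_prod_le_sum_prod_piecewise D ℓ (fun i => hF i (z i))
          (fun i => hF i (w i)) hagree hzw).trans_eq
          (sum_congr rfl fun T _ => prod_congr rfl fun i _ => ?_)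
        by_cases hi : i ∈ T <;> simp [hi]
    _ = ∑ y ∈ (D.powersetCard ℓ).image (·.piecewise w z), productWeight F y :=
        (sum_image fun T hT T' hT' =>
          injOn_piecewise_of_subset z w (hsub T hT) (hsub T' hT')).symm
    _ ≤ ∑ y with hammingDist y z = ℓ, productWeight F y := by
        refine sum_le_sum_of_subset_of_nonneg (fun y hy => ?_) fun y _ _ =>
          productWeight_nonneg hF y
        obtain ⟨T, hT, rfl⟩ := mem_image.1 hy
        simp [hammingDist_piecewise_of_subset (hsub T hT), (mem_powersetCard.1 hT).2]

theorem sum_choose_mul_productWeight_le_sum_hammingBall (hF : ∀ i b, 0 ≤ F i b) {m : ℕ}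
    {z w : ∀ i, β i} (hzw : productWeight F z ≤ productWeight F w) (hm : m ≤ hammingDist z w)
    (r : ℕ) :
    (∑ ℓ ∈ range (r + 1), (m.choose ℓ : ℝ)) * productWeight F z
      ≤ ∑ y ∈ hammingBall z r, productWeight F y := by
  rw [sum_mul, ← sum_fiberwise_of_maps_to (g := fun y => hammingDist y z)
    (t := range (r + 1)) fun y hy => mem_range_succ_iff.2 (mem_hammingBall.1 hy)]
  refine sum_le_sum fun ℓ hℓ => ?_
  refine (choose_mul_productWeight_le_sum_hammingSphere hF hzw hm ℓ).trans_eq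
    (sum_congr ?_ fun _ _ => rfl)
  have := mem_range_succ_iff.1 hℓ
  ext y
  simp only [mem_filter, mem_univ, true_and, mem_hammingBall]
  exact ⟨fun h => ⟨by omega, h⟩, And.right⟩

theorem sum_choose_mul_sum_erase_le_one (hF : ∀ i b, 0 ≤ F i b) (hF1 : ∀ i, ∑ b, F i b = 1)
    {m : ℕ} {s : Finset (∀ i, β i)}
    (hs : ∀ z ∈ s, ∀ z' ∈ s, z ≠ z' → m ≤ hammingDist z z') {w : ∀ i, β i} (hw : w ∈ s)
    (hmax : ∀ z ∈ s, productWeight F z ≤ productWeight F w) :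
    (∑ ℓ ∈ range ((m - 1) / 2 + 1), (m.choose ℓ : ℝ)) * ∑ z ∈ s.erase w, productWeight F z
      ≤ 1 := by
  have hdisj : (s.erase w : Set (∀ i, β i)).PairwiseDisjoint (hammingBall · ((m - 1) / 2)) := by
    intro z hz z' hz' hne
    have := hs z (mem_of_mem_erase hz) z' (mem_of_mem_erase hz') hne
    have := hammingDist_pos.2 hne
    exact disjoint_hammingBall (by omega)
  calc _ = ∑ z ∈ s.erase w,
        (∑ ℓ ∈ range ((m - 1) / 2 + 1), (m.choose ℓ : ℝ)) * productWeight F z := mul_sum _ _ _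
    _ ≤ ∑ z ∈ s.erase w, ∑ y ∈ hammingBall z ((m - 1) / 2), productWeight F y :=
        sum_le_sum fun z hz => sum_choose_mul_productWeight_le_sum_hammingBall hF
          (hmax z (mem_of_mem_erase hz)) (hs z (mem_of_mem_erase hz) w hw (ne_of_mem_erase hz)) _
    _ = ∑ y ∈ (s.erase w).biUnion (hammingBall · ((m - 1) / 2)), productWeight F y :=
        (sum_biUnion hdisj).symm
    _ ≤ ∑ y, productWeight F y :=
        sum_le_sum_of_subset_of_nonneg (subset_univ _) fun y _ _ => productWeight_nonneg hF y
    _ = 1 := by rw [sum_productWeight, prod_eq_one fun i _ => hF1 i]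

theorem sum_mul_sq_sub_weightedMean_le_inv_mul_sq (hF : ∀ i b, 0 ≤ F i b)
    (hF1 : ∀ i, ∑ b, F i b = 1) {m : ℕ} {s : Finset (∀ i, β i)}
    (hne : s.Nonempty) (hs : ∀ z ∈ s, ∀ z' ∈ s, z ≠ z' → m ≤ hammingDist z z')
    (hW : 0 < ∑ z ∈ s, productWeight F z) (g : (∀ i, β i) → ℝ) :
    ∑ z ∈ s, productWeight F z *
        (g z - (∑ z ∈ s, productWeight F z)⁻¹ * ∑ z ∈ s, productWeight F z * g z) ^ 2
      ≤ (∑ ℓ ∈ range ((m - 1) / 2 + 1), (m.choose ℓ : ℝ))⁻¹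
        * (s.sup' hne g - s.inf' hne g) ^ 2 := by
  have hc : 0 < ∑ ℓ ∈ range ((m - 1) / 2 + 1), (m.choose ℓ : ℝ) := by
    rw [sum_range_succ', Nat.choose_zero_right, Nat.cast_one]
    positivity
  set c := ∑ ℓ ∈ range ((m - 1) / 2 + 1), (m.choose ℓ : ℝ)
  obtain ⟨w, hw, hmax⟩ := s.exists_max_image (productWeight F) hne
  have hmass : ∑ z ∈ s.erase w, productWeight F z ≤ c⁻¹ := by
    rw [← mul_one c⁻¹, le_inv_mul_iff₀ hc]
    exact sum_choose_mul_sum_erase_le_one hF hF1 hs hw hmax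
  calc _ ≤ ∑ z ∈ s, productWeight F z * (g z - g w) ^ 2 :=
        sum_mul_sq_sub_weightedMean_le s _ g hW (g w)
    _ = ∑ z ∈ s.erase w, productWeight F z * (g z - g w) ^ 2 := (sum_erase _ (by simp)).symm
    _ ≤ ∑ z ∈ s.erase w, productWeight F z * (s.sup' hne g - s.inf' hne g) ^ 2 :=
        sum_le_sum fun z hz => mul_le_mul_of_nonneg_left
          (sq_sub_le_sq_sup'_sub_inf' hne g (mem_of_mem_erase hz) hw) (productWeight_nonneg hF z)
    _ = (∑ z ∈ s.erase w, productWeight F z) * (s.sup' hne g - s.inf' hne g) ^ 2 :=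
        (sum_mul _ _ _).symm
    _ ≤ c⁻¹ * (s.sup' hne g - s.inf' hne g) ^ 2 := by gcongr

end ProductWeight

open Classical in
theorem separable_fisher_info_le_general
    (n m : ℕ) (q : Fin n → ℝ) (hq : ∀ i, 0 ≤ q i ∧ q i ≤ 1)
    (P : (Fin n → Bool) → ℝ)
    (hP : ∀ x, P x = ∏ i, if x i then q i else 1 - q i)
    {K : Type*} [Fintype K] (S : K → Finset (Fin n → Bool))
    (hne : ∀ κ, (S κ).Nonempty)
    (hdist : ∀ κ, ∀ z ∈ S κ, ∀ z' ∈ S κ, z ≠ z' → m ≤ hammingDist z z')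
    (g : (Fin n → Bool) → ℝ) :
    ∑ κ ∈ Finset.univ.filter (fun κ => 0 < ∑ z ∈ S κ, P z),
        ∑ z ∈ S κ, P z * (g z - (∑ z ∈ S κ, P z)⁻¹ * ∑ z ∈ S κ, P z * g z) ^ 2
      ≤ (∑ ℓ ∈ Finset.range ((m - 1) / 2 + 1), (m.choose ℓ : ℝ))⁻¹
        * ∑ κ, ((S κ).sup' (hne κ) g - (S κ).inf' (hne κ) g) ^ 2 := by
  obtain rfl : P = productWeight fun i (b : Bool) => if b then q i else 1 - q i := funext hP
  have hF : ∀ i (b : Bool), 0 ≤ if b then q i else 1 - q i := fun i b => by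
    cases b <;> simp [(hq i).1, (hq i).2]
  have hF1 : ∀ i, ∑ b : Bool, (if b then q i else 1 - q i) = 1 := fun i => by simp
  rw [mul_sum]
  calc _ ≤ ∑ κ ∈ univ.filter (fun κ => 0 < ∑ z ∈ S κ, productWeight _ z),
        (∑ ℓ ∈ range ((m - 1) / 2 + 1), (m.choose ℓ : ℝ))⁻¹
          * ((S κ).sup' (hne κ) g - (S κ).inf' (hne κ) g) ^ 2 :=
        sum_le_sum fun κ hκ => sum_mul_sq_sub_weightedMean_le_inv_mul_sq hF hF1 (hne κ)
          (hdist κ) (mem_filter.1 hκ).2 g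
    _ ≤ _ := sum_le_sum_of_subset_of_nonneg (filter_subset _ _) fun _ _ _ => by positivity

open Classical in
/-- Paper: bound `𝓕_G^{sep} ≤ c ∑_κ ‖G_κ‖²_Spec` on the QFI
of a product sensor state under strong correlated noise.
Let `P` be a product probability density on bitstrings of length `n`, `m ≥ 1`,
and `{S κ}` a finite partition of `{0,1}^n` into (nonempty) classes within each
of which any two distinct bitstrings have Hamming distance at least `m`. For a
function `g` and each class `κ` with weight `W κ = ∑_{z∈S κ} P z > 0`, let
`μ κ = (W κ)⁻¹ ∑_{z∈S κ} P z · g z` and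
`osc κ = max_{z∈S κ} g z − min_{z∈S κ} g z`. Then
`∑_{κ : W κ > 0} ∑_{z∈S κ} P z (g z − μ κ)²
  ≤ (∑_{ℓ=0}^{⌊(m−1)/2⌋} C(m,ℓ))⁻¹ · ∑_κ (osc κ)²`. -/
theorem separable_fisher_info_le
    (n m : ℕ) (hm : 1 ≤ m) (q : Fin n → ℝ) (hq : ∀ i, 0 ≤ q i ∧ q i ≤ 1)
    (P : (Fin n → Bool) → ℝ)
    (hP : ∀ x, P x = ∏ i, if x i then q i else 1 - q i)
    {K : Type*} [Fintype K] (S : K → Finset (Fin n → Bool))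
    (hne : ∀ κ, (S κ).Nonempty)
    (hdisj : ∀ κ κ', κ ≠ κ' → Disjoint (S κ) (S κ'))
    (hcover : ∀ x, ∃ κ, x ∈ S κ)
    (hdist : ∀ κ, ∀ z ∈ S κ, ∀ z' ∈ S κ, z ≠ z' → m ≤ hammingDist z z')
    (g : (Fin n → Bool) → ℝ) :
    ∑ κ ∈ Finset.univ.filter (fun κ => 0 < ∑ z ∈ S κ, P z),
        ∑ z ∈ S κ, P z * (g z - (∑ z ∈ S κ, P z)⁻¹ * ∑ z ∈ S κ, P z * g z) ^ 2
      ≤ (∑ ℓ ∈ Finset.range ((m - 1) / 2 + 1), (m.choose ℓ : ℝ))⁻¹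
        * ∑ κ, ((S κ).sup' (hne κ) g - (S κ).inf' (hne κ) g) ^ 2 :=
  separable_fisher_info_le_general n m q hq P hP S hne hdist g
end
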